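/- arXiv:1904.02864 — 2 statements merged into one kernel-verified Lean document; each statement's English description precedes it below -/
import Mathlib

section
/- There exist two cascades (X,f) and (Y,g), each defined on a complete metric space (a closed subset of ℝ), such that neither (X,f) nor (Y,g) is syndetically sensitive, but the product cascade (X×Y, f×g) is cofinitely sensitive. -/
/-- `A ⊆ ℕ` is syndetic: bounded gaps. -/
def IsSyndetic (A : Set ℕ) : Prop := ∃ N : ℕ, ∀ t : ℕ, ∃ k < N, t + k ∈ A

/-- `A ⊆ ℕ` is thick: contains arbitrarily long runs of consecutive integers. -/
def IsThick (A : Set ℕ) : Prop := ∀ n : ℕ, ∃ t : ℕ, ∀ k ≤ n, t + k ∈ A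

/-- `N(A, ε) = {n : diam (fⁿ(A)) > ε}` for a cascade `f`. -/
def sensTimes {X : Type*} [PseudoMetricSpace X] (f : X → X) (A : Set X) (ε : ℝ) : Set ℕ :=
  {n : ℕ | ENNReal.ofReal ε < EMetric.diam (f^[n] '' A)}

/-- Sensitivity of a cascade. -/
def Sensitive {X : Type*} [PseudoMetricSpace X] (f : X → X) : Prop :=
  ∃ ε > (0 : ℝ), ∀ U : Set X, IsOpen U → U.Nonempty → (sensTimes f U ε).Nonempty

/-- Syndetic sensitivity of a cascade. -/
def SyndeticallySensitive {X : Type*} [PseudoMetricSpace X] (f : X → X) : Prop :=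
  ∃ ε > (0 : ℝ), ∀ U : Set X, IsOpen U → U.Nonempty → IsSyndetic (sensTimes f U ε)

/-- Thick sensitivity of a cascade. -/
def ThicklySensitive {X : Type*} [PseudoMetricSpace X] (f : X → X) : Prop :=
  ∃ ε > (0 : ℝ), ∀ U : Set X, IsOpen U → U.Nonempty → IsThick (sensTimes f U ε)

/-- Cofinite sensitivity of a cascade. -/
def CofinitelySensitive {X : Type*} [PseudoMetricSpace X] (f : X → X) : Prop :=
  ∃ ε > (0 : ℝ), ∀ U : Set X, IsOpen U → U.Nonempty → (sensTimes f U ε)ᶜ.Finite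

/-!
Given lengths `0 < ℓ m ≤ 1`, let `X` be the union of the rungs `[3m, 3m + ℓ m]` and let the
cascade map each rung onto the next one by a rescaled tent map. Iterates of the tent map blow every
subinterval of `[0, 1]` up to all of `[0, 1]`, so for every nonempty open `U` there is an `m` with
`diam fⁿ(U) = ℓ (m + n)` for all large `n`, while `diam fⁿ(U) ≤ ℓ (m + n)` for all `n` if `U`
lies in rung `m`. Hence the cascade is not syndetically sensitive once `ℓ` is small on arbitrarily
long runs, and the product of two such cascades is cofinitely sensitive if, for all shifts, one of
the two length sequences is `1` at every large time. Both hold for `ℓ = 2⁻ʲ` on the blocks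
`[c 4ʲ, c 4ʲ + j)` and `ℓ = 1` elsewhere, with `c = 1` and `c = 2`: the blocks of the two scales
drift apart.
-/

open Set Function Filter Topology

theorem IsSyndetic.inter_nonempty_of_isThick {A B : Set ℕ} (hA : IsSyndetic A) (hB : IsThick B) :
    (A ∩ B).Nonempty := by
  obtain ⟨N, hN⟩ := hA
  obtain ⟨t, ht⟩ := hB N
  obtain ⟨k, hk, hkA⟩ := hN t
  exact ⟨t + k, hkA, ht k hk.le⟩

section Product

variable {α β : Type*} [PseudoMetricSpace α] [PseudoMetricSpace β]

theorem sensTimes_mono {f : α → α} {U U' : Set α} (h : U ⊆ U') (ε : ℝ) :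
    sensTimes f U ε ⊆ sensTimes f U' ε := fun _ hn =>
  hn.trans_le (Metric.ediam_mono (image_mono h))

theorem ediam_le_ediam_prod_left (s : Set α) {t : Set β} (ht : t.Nonempty) :
    Metric.ediam s ≤ Metric.ediam (s ×ˢ t) := by
  obtain ⟨y, hy⟩ := ht
  have hiso : Isometry fun x : α => (x, y) := fun a b => by simp [Prod.edist_eq]
  rw [← hiso.ediam_image]
  exact Metric.ediam_mono (image_subset_iff.2 fun x hx => ⟨hx, hy⟩)

theorem ediam_le_ediam_prod_right {s : Set α} (hs : s.Nonempty) (t : Set β) :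
    Metric.ediam t ≤ Metric.ediam (s ×ˢ t) := by
  obtain ⟨x, hx⟩ := hs
  have hiso : Isometry fun y : β => (x, y) := fun a b => by simp [Prod.edist_eq]
  rw [← hiso.ediam_image]
  exact Metric.ediam_mono (image_subset_iff.2 fun y hy => ⟨hx, hy⟩)

theorem sensTimes_union_subset_sensTimes_prodMap {f : α → α} {g : β → β} {U : Set α}
    {V : Set β} (hU : U.Nonempty) (hV : V.Nonempty) (ε : ℝ) :
    sensTimes f U ε ∪ sensTimes g V ε ⊆ sensTimes (Prod.map f g) (U ×ˢ V) ε := by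
  intro n hn
  change _ < Metric.ediam ((Prod.map f g)^[n] '' (U ×ˢ V))
  rw [Prod.map_iterate, prodMap_image_prod]
  rcases hn with hn | hn
  · exact hn.trans_le (ediam_le_ediam_prod_left _ (hV.image _))
  · exact hn.trans_le (ediam_le_ediam_prod_right (hU.image _) _)

theorem cofinitelySensitive_prodMap {f : α → α} {g : β → β} {ε : ℝ} (hε : 0 < ε)
    (h : ∀ U : Set α, IsOpen U → U.Nonempty → ∀ V : Set β, IsOpen V → V.Nonempty →
      ∀ᶠ n in atTop, n ∈ sensTimes f U ε ∨ n ∈ sensTimes g V ε) :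
    CofinitelySensitive (Prod.map f g) := by
  refine ⟨ε, hε, fun W hW ⟨⟨x, y⟩, hxy⟩ => ?_⟩
  obtain ⟨U, V, hU, hV, hx, hy, hUV⟩ := isOpen_prod_iff.1 hW x y hxy
  have hsub := (sensTimes_union_subset_sensTimes_prodMap ⟨x, hx⟩ ⟨y, hy⟩ ε).trans
    (sensTimes_mono (f := Prod.map f g) hUV ε)
  rw [← mem_cofinite, Nat.cofinite_eq_atTop]
  exact (h U hU ⟨x, hx⟩ V hV ⟨y, hy⟩).mono fun n hn => hsub hn

end Product

noncomputable def tent (x : ℝ) : ℝ := min (2 * x) (2 - 2 * x)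

theorem tent_image_Icc_of_le_half {a b : ℝ} (hab : a ≤ b) (hb : b ≤ 1 / 2) :
    tent '' Icc a b = Icc (2 * a) (2 * b) := by
  have heq : EqOn tent (2 * ·) (Icc a b) := fun x hx =>
    min_eq_left (by linarith [hx.2])
  rw [heq.image_eq, image_mul_left_Icc (by norm_num) hab]

theorem tent_image_Icc_of_half_le {a b : ℝ} (ha : 1 / 2 ≤ a) :
    tent '' Icc a b = Icc (2 - 2 * b) (2 - 2 * a) := by
  have heq : EqOn tent (fun x => 2 - 2 * x) (Icc a b) := fun x hx =>
    min_eq_right (by linarith [hx.1])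
  rw [heq.image_eq]
  ext y
  simp only [mem_image, mem_Icc]
  constructor
  · rintro ⟨x, hx, rfl⟩
    constructor <;> linarith [hx.1, hx.2]
  · rintro ⟨h₁, h₂⟩
    exact ⟨(2 - y) / 2, ⟨by linarith, by linarith⟩, by ring⟩

theorem tent_image_unitInterval : tent '' Icc 0 1 = Icc 0 1 := by
  refine (image_subset_iff.2 fun x hx => ?_).antisymm ?_
  · simp only [tent, mem_preimage, mem_Icc] at hx ⊢
    constructor <;> cases min_choice (2 * x) (2 - 2 * x) <;> grind
  · calc Icc (0 : ℝ) 1 = tent '' Icc 0 (1 / 2) := by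
          rw [tent_image_Icc_of_le_half (by norm_num) le_rfl]; norm_num
      _ ⊆ tent '' Icc 0 1 := image_mono (Icc_subset_Icc le_rfl (by norm_num))

theorem tent_iterate_image_unitInterval (n : ℕ) : tent^[n] '' Icc 0 1 = Icc 0 1 := by
  induction n with
  | zero => simp
  | succ n ih => rw [iterate_succ, image_comp, tent_image_unitInterval, ih]

theorem tent_iterate_image_dyadic (n k : ℕ) (hk : k < 2 ^ n) :
    tent^[n] '' Icc (k / 2 ^ n) ((k + 1) / 2 ^ n) = Icc 0 1 := by
  induction n generalizing k with
  | zero =>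
    obtain rfl : k = 0 := by omega
    norm_num
  | succ n ih =>
    rw [iterate_succ, image_comp]
    have h2n : (0 : ℝ) < 2 ^ n := by positivity
    rcases lt_or_ge k (2 ^ n) with hlt | hge
    · have hk' : (k : ℝ) + 1 ≤ 2 ^ n := by exact_mod_cast hlt
      rw [tent_image_Icc_of_le_half (by gcongr; linarith)
        (by rw [div_le_iff₀ (by positivity), pow_succ]; linarith)]
      convert ih k hlt using 3 <;> rw [pow_succ] <;> field_simp
    · set j := 2 ^ (n + 1) - (k + 1) with hj
      have hj_real : (j : ℝ) = 2 ^ (n + 1) - (k + 1) := by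
        rw [hj, Nat.cast_sub hk]; push_cast; ring
      have hk' : (2 : ℝ) ^ n ≤ k := by exact_mod_cast hge
      rw [tent_image_Icc_of_half_le (by rw [le_div_iff₀ (by positivity), pow_succ]; linarith)]
      convert ih j (by omega) using 3 <;> rw [hj_real, pow_succ]
      · field_simp
      · field_simp; ring

theorem tent_iterate_image_Icc_eventually_eq {a b : ℝ} (ha : 0 ≤ a) (hab : a < b) (hb : b ≤ 1) :
    ∀ᶠ n in atTop, tent^[n] '' Icc a b = Icc 0 1 := by
  filter_upwards [(tendsto_pow_atTop_atTop_of_one_lt one_lt_two).eventually_ge_atTop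
    (2 / (b - a))] with n hn
  have h2n : (0 : ℝ) < 2 ^ n := by positivity
  have hwide : 2 ≤ (b - a) * 2 ^ n := by rwa [div_le_iff₀ (by linarith), mul_comm] at hn
  -- the dyadic interval of length `2⁻¹ ^ n` starting at the first grid point `≥ a` fits in `[a, b]`
  set k := ⌈a * 2 ^ n⌉₊
  have hk_ge : a * 2 ^ n ≤ k := Nat.le_ceil _
  have hk_le : (k : ℝ) < a * 2 ^ n + 1 := Nat.ceil_lt_add_one (by positivity)
  have hak : a ≤ k / 2 ^ n := by rwa [le_div_iff₀ h2n]
  have hkb : (k + 1) / 2 ^ n ≤ b := by rw [div_le_iff₀ h2n]; linarith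
  have hk : k < 2 ^ n := by
    have : ((k : ℝ) + 1) ≤ 2 ^ n := by
      rw [← div_le_one h2n]; linarith
    exact_mod_cast (by linarith : (k : ℝ) < 2 ^ n)
  apply Subset.antisymm
  · rw [← tent_iterate_image_unitInterval n]
    exact image_mono (Icc_subset_Icc ha hb)
  · rw [← tent_iterate_image_dyadic n k hk]
    exact image_mono (Icc_subset_Icc hak hkb)

structure Ladder where
  len : ℕ → ℝ
  len_pos : ∀ m, 0 < len m
  len_le_one : ∀ m, len m ≤ 1

namespace Ladder

variable (L : Ladder)

def rung (m : ℕ) : Set ℝ := Icc (3 * m) (3 * m + L.len m)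

def carrier : Set ℝ := ⋃ m, L.rung m

def chart (m : ℕ) (t : ℝ) : ℝ := 3 * m + L.len m * t

-- On rung `m`, `step` is the tent map read through the charts of rungs `m` and `m + 1`.
noncomputable def step (x : ℝ) : ℝ :=
  L.chart (⌊x / 3⌋₊ + 1) (tent ((x - 3 * ⌊x / 3⌋₊) / L.len ⌊x / 3⌋₊))

variable {L}

theorem mem_rung_of_mem_Ioo {x : ℝ} {m : ℕ} (hx : x ∈ L.carrier)
    (hxm : x ∈ Ioo (3 * (m : ℝ) - 1) (3 * m + 2)) : x ∈ L.rung m := by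
  obtain ⟨m', hm'⟩ := mem_iUnion.1 hx
  have h₁ : (m' : ℝ) < m + 1 := by linarith [hm'.1, hxm.2]
  have h₂ : (m : ℝ) < m' + 1 := by linarith [hm'.2, hxm.1, L.len_le_one m']
  obtain rfl : m' = m := by
    have : m' < m + 1 := by exact_mod_cast h₁
    have : m < m' + 1 := by exact_mod_cast h₂
    omega
  exact hm'

theorem floor_div_three_eq_of_mem_rung {x : ℝ} {m : ℕ} (hx : x ∈ L.rung m) : ⌊x / 3⌋₊ = m := by
  rw [Nat.floor_eq_iff (by linarith [hx.1, (m.cast_nonneg : (0 : ℝ) ≤ m)]), le_div_iff₀ three_pos,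
    div_lt_iff₀ three_pos]
  constructor <;> linarith [hx.1, hx.2, L.len_le_one m]

variable (L)

theorem isClosed_carrier : IsClosed L.carrier := by
  refine LocallyFinite.isClosed_iUnion (fun x => ⟨Iio (x + 1), Iio_mem_nhds (lt_add_one x), ?_⟩)
    fun m => isClosed_Icc
  refine (finite_Iic ⌊x + 1⌋₊).subset fun m ⟨y, hym, hyx⟩ => Nat.le_floor ?_
  have h₁ : 3 * (m : ℝ) ≤ y := hym.1
  have h₂ : y < x + 1 := hyx
  linarith [(m.cast_nonneg : (0 : ℝ) ≤ m)]

theorem chart_image_Icc (m : ℕ) (a b : ℝ) :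
    L.chart m '' Icc a b = Icc (L.chart m a) (L.chart m b) := by
  have h := L.len_pos m
  ext y
  simp only [mem_image, mem_Icc, chart]
  constructor
  · rintro ⟨t, ⟨ht₁, ht₂⟩, rfl⟩
    constructor <;> nlinarith
  · rintro ⟨h₁, h₂⟩
    refine ⟨(y - 3 * m) / L.len m, ⟨?_, ?_⟩, by field_simp; ring⟩
    · rw [le_div_iff₀ h]; linarith
    · rw [div_le_iff₀ h]; linarith

theorem rung_eq_chart_image (m : ℕ) : L.rung m = L.chart m '' Icc 0 1 := by
  rw [chart_image_Icc, rung, chart, chart, mul_zero, add_zero, mul_one]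

theorem step_chart {m : ℕ} {t : ℝ} (ht : t ∈ Icc 0 1) :
    L.step (L.chart m t) = L.chart (m + 1) (tent t) := by
  have hmem : L.chart m t ∈ L.rung m := by
    rw [rung_eq_chart_image]; exact mem_image_of_mem _ ht
  rw [step, floor_div_three_eq_of_mem_rung hmem]
  congr 2
  rw [chart, add_sub_cancel_left, mul_div_cancel_left₀ _ (L.len_pos m).ne']

theorem iterate_step_image_chart_image (n m : ℕ) {s : Set ℝ} (hs : s ⊆ Icc 0 1) :
    L.step^[n] '' (L.chart m '' s) = L.chart (m + n) '' (tent^[n] '' s) := by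
  induction n generalizing m s with
  | zero => simp
  | succ n ih =>
    have hstep : L.step '' (L.chart m '' s) = L.chart (m + 1) '' (tent '' s) := by
      simp only [image_image]
      exact image_congr fun t ht => L.step_chart (hs ht)
    have htent : tent '' s ⊆ Icc 0 1 :=
      tent_image_unitInterval ▸ image_mono hs
    rw [iterate_succ, image_comp, hstep, ih (m + 1) htent, iterate_succ, image_comp,
      add_right_comm, add_assoc]

theorem iterate_step_image_rung (n m : ℕ) : L.step^[n] '' L.rung m = L.rung (m + n) := by
  rw [rung_eq_chart_image, iterate_step_image_chart_image L n m le_rfl,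
    tent_iterate_image_unitInterval, rung_eq_chart_image]

theorem mapsTo_step : MapsTo L.step L.carrier L.carrier := fun x hx => by
  obtain ⟨m, hm⟩ := mem_iUnion.1 hx
  exact mem_iUnion.2 ⟨m + 1, L.iterate_step_image_rung 1 m ▸ mem_image_of_mem L.step hm⟩

theorem continuousOn_step : ContinuousOn L.step L.carrier := fun x hx => by
  obtain ⟨m, hm⟩ := mem_iUnion.1 hx
  have hm' : 3 * (m : ℝ) ≤ x ∧ x ≤ 3 * m + L.len m := hm
  have hIoo : Ioo (3 * (m : ℝ) - 1) (3 * m + 2) ∈ 𝓝 x :=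
    Ioo_mem_nhds (by linarith [hm'.1]) (by linarith [hm'.2, L.len_le_one m])
  have heq : L.step =ᶠ[𝓝[L.carrier] x]
      fun y => L.chart (m + 1) (tent ((y - 3 * m) / L.len m)) := by
    filter_upwards [inter_mem_nhdsWithin L.carrier hIoo] with y ⟨hyX, hyI⟩
    rw [step, floor_div_three_eq_of_mem_rung (mem_rung_of_mem_Ioo hyX hyI)]
  refine ContinuousWithinAt.congr_of_eventuallyEq ?_ heq
    (by rw [step, floor_div_three_eq_of_mem_rung hm])
  apply Continuous.continuousWithinAt
  unfold chart tent
  fun_prop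

noncomputable def cascade : L.carrier → L.carrier := L.mapsTo_step.restrict

theorem continuous_cascade : Continuous L.cascade :=
  L.continuousOn_step.mapsToRestrict L.mapsTo_step

theorem chart_mem_carrier (m : ℕ) {t : ℝ} (ht : t ∈ Icc 0 1) : L.chart m t ∈ L.carrier :=
  mem_iUnion.2 ⟨m, L.rung_eq_chart_image m ▸ mem_image_of_mem _ ht⟩

theorem dist_chart_le (m : ℕ) (s t : ℝ) : dist (L.chart m s) (L.chart m t) ≤ dist s t := by
  rw [Real.dist_eq, Real.dist_eq, chart, chart, add_sub_add_left_eq_sub, ← mul_sub, abs_mul,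
    abs_of_pos (L.len_pos m)]
  exact mul_le_of_le_one_left (abs_nonneg _) (L.len_le_one m)

theorem image_iterate_cascade (n : ℕ) (U : Set L.carrier) :
    (↑) '' (L.cascade^[n] '' U) = L.step^[n] '' ((↑) '' U) := by
  simp only [image_image, cascade, MapsTo.coe_iterate_restrict]

theorem ediam_image_iterate_cascade (n : ℕ) (U : Set L.carrier) :
    Metric.ediam (L.cascade^[n] '' U) = Metric.ediam (L.step^[n] '' ((↑) '' U)) := by
  rw [← image_iterate_cascade, isometry_subtype_coe.ediam_image]

theorem ediam_rung (m : ℕ) : Metric.ediam (L.rung m) = ENNReal.ofReal (L.len m) := by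
  rw [rung, Real.ediam_Icc, add_sub_cancel_left]

theorem ediam_image_iterate_cascade_le {U : Set L.carrier} {m : ℕ}
    (hU : (↑) '' U ⊆ L.rung m) (n : ℕ) :
    Metric.ediam (L.cascade^[n] '' U) ≤ ENNReal.ofReal (L.len (m + n)) := by
  rw [ediam_image_iterate_cascade, ← ediam_rung, ← iterate_step_image_rung]
  exact Metric.ediam_mono (image_mono hU)

theorem exists_chart_image_Icc_subset {U : Set L.carrier} (hU : IsOpen U) (hne : U.Nonempty) :
    ∃ m a b, 0 ≤ a ∧ a < b ∧ b ≤ 1 ∧ L.chart m '' Icc a b ⊆ (↑) '' U := by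
  obtain ⟨⟨x, hx⟩, hxU⟩ := hne
  obtain ⟨O, hO, rfl⟩ := isOpen_induced_iff.1 hU
  obtain ⟨δ, hδ, hball⟩ := Metric.isOpen_iff.1 hO x hxU
  obtain ⟨m, hm⟩ := mem_iUnion.1 hx
  rw [rung_eq_chart_image] at hm
  obtain ⟨t, ⟨ht₀, ht₁⟩, rfl⟩ := hm
  refine ⟨m, max 0 (t - δ / 2), min 1 (t + δ / 2), le_max_left _ _,
    max_lt (lt_min (by linarith) (by linarith)) (lt_min (by linarith) (by linarith)),
    min_le_left _ _, ?_⟩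
  rintro _ ⟨s, ⟨hs₀, hs₁⟩, rfl⟩
  have hs : s ∈ Icc 0 1 := ⟨(le_max_left _ _).trans hs₀, hs₁.trans (min_le_left _ _)⟩
  refine ⟨⟨_, L.chart_mem_carrier m hs⟩, hball ?_, rfl⟩
  have hst : dist s t ≤ δ / 2 := by
    rw [Real.dist_eq, abs_le]
    constructor <;> linarith [le_max_right 0 (t - δ / 2), min_le_right 1 (t + δ / 2)]
  exact (L.dist_chart_le m s t).trans_lt (by linarith)

theorem exists_eventually_rung_subset {U : Set L.carrier} (hU : IsOpen U) (hne : U.Nonempty) :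
    ∃ m, ∀ᶠ n in atTop, L.rung (m + n) ⊆ L.step^[n] '' ((↑) '' U) := by
  obtain ⟨m, a, b, ha, hab, hb, hsub⟩ := L.exists_chart_image_Icc_subset hU hne
  refine ⟨m, (tent_iterate_image_Icc_eventually_eq ha hab hb).mono fun n hn => ?_⟩
  rw [rung_eq_chart_image, ← hn, ← iterate_step_image_chart_image L n m (Icc_subset_Icc ha hb)]
  exact image_mono hsub

theorem exists_eventually_len_le_ediam {U : Set L.carrier} (hU : IsOpen U) (hne : U.Nonempty) :
    ∃ m, ∀ᶠ n in atTop,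
      ENNReal.ofReal (L.len (m + n)) ≤ Metric.ediam (L.cascade^[n] '' U) := by
  obtain ⟨m, hm⟩ := L.exists_eventually_rung_subset hU hne
  refine ⟨m, hm.mono fun n hn => ?_⟩
  rw [← ediam_rung, ediam_image_iterate_cascade]
  exact Metric.ediam_mono hn

theorem not_syndeticallySensitive_cascade (h : ∀ ε > 0, IsThick {n | L.len n ≤ ε}) :
    ¬ SyndeticallySensitive L.cascade := by
  rintro ⟨ε, hε, hsynd⟩
  set U : Set L.carrier := Subtype.val ⁻¹' Ioo (-1) 2
  have hU : IsOpen U := isOpen_Ioo.preimage continuous_subtype_val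
  have hne : U.Nonempty :=
    ⟨⟨0, by simpa [chart] using L.chart_mem_carrier 0 (left_mem_Icc.2 zero_le_one)⟩,
      by norm_num [U]⟩
  have hU₀ : (↑) '' U ⊆ L.rung 0 := by
    rintro _ ⟨y, hy, rfl⟩
    exact mem_rung_of_mem_Ioo y.2 (by simpa [U] using hy)
  obtain ⟨n, hn, hsmall⟩ := (hsynd U hU hne).inter_nonempty_of_isThick (h ε hε)
  have hle := L.ediam_image_iterate_cascade_le hU₀ n
  rw [zero_add] at hle
  exact (hn.trans_le hle).not_ge (ENNReal.ofReal_le_ofReal hsmall)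

theorem cofinitelySensitive_prodMap_cascade (L' : Ladder) {δ : ℝ} (hδ : 0 < δ)
    (h : ∀ k k', ∀ᶠ n in atTop, δ < L.len (k + n) ∨ δ < L'.len (k' + n)) :
    CofinitelySensitive (Prod.map L.cascade L'.cascade) := by
  refine cofinitelySensitive_prodMap hδ fun U hU hUne V hV hVne => ?_
  obtain ⟨k, hk⟩ := L.exists_eventually_len_le_ediam hU hUne
  obtain ⟨k', hk'⟩ := L'.exists_eventually_len_le_ediam hV hVne
  filter_upwards [hk, hk', h k k'] with n hn hn' hlen
  refine hlen.imp (fun hδn => ?_) (fun hδn => ?_)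
  · exact ((ENNReal.ofReal_lt_ofReal_iff (L.len_pos _)).2 hδn).trans_le hn
  · exact ((ENNReal.ofReal_lt_ofReal_iff (L'.len_pos _)).2 hδn).trans_le hn'

end Ladder

def blockIndex (c n : ℕ) : ℕ := Nat.log 4 (n / c)

theorem blockIndex_mul_pow_add {c j k : ℕ} (hc : 0 < c) (hk : k < 4 ^ j) :
    blockIndex c (c * 4 ^ j + k) = j := by
  rw [blockIndex, Nat.mul_add_div hc, Nat.log_eq_iff (Or.inr ⟨by norm_num, by positivity⟩),
    pow_succ]
  have := Nat.div_le_self k c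
  generalize k / c = q at *
  omega

-- `len` is `2⁻¹ ^ j` on the block `[c * 4 ^ j, c * 4 ^ j + j)`, `j ≥ 1`, and `1` elsewhere;
-- `blockIndex c n` is the only `j` whose block can contain `n`.
noncomputable def gapLadder (c : ℕ) : Ladder where
  len n := if n < c * 4 ^ blockIndex c n + blockIndex c n then 2⁻¹ ^ blockIndex c n else 1
  len_pos n := by split_ifs <;> positivity
  len_le_one n := by split_ifs <;> norm_num [pow_le_one₀]

theorem gapLadder_len_mul_pow_add {c j k : ℕ} (hc : 0 < c) (hk : k < j) :
    (gapLadder c).len (c * 4 ^ j + k) = 2⁻¹ ^ j := by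
  have hj : blockIndex c (c * 4 ^ j + k) = j :=
    blockIndex_mul_pow_add hc (hk.trans (Nat.lt_pow_self (by norm_num)))
  simp only [gapLadder, hj, add_lt_add_iff_left, hk, if_true]

theorem gapLadder_len_eq_one_or_mem_block (c n : ℕ) :
    (gapLadder c).len n = 1 ∨ ∃ j, 1 ≤ j ∧ c * 4 ^ j ≤ n ∧ n < c * 4 ^ j + j := by
  simp only [gapLadder]
  split_ifs with hn
  · rcases Nat.eq_zero_or_pos (blockIndex c n) with h0 | hpos
    · left; rw [h0, pow_zero]
    · have hnc : n / c ≠ 0 := fun h => hpos.ne' (by rw [blockIndex, h, Nat.log_zero_right])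
      have hle : c * 4 ^ blockIndex c n ≤ n :=
        (Nat.mul_le_mul_left c (Nat.pow_log_le_self 4 hnc)).trans (Nat.mul_div_le n c)
      exact Or.inr ⟨_, hpos, hle, hn⟩
  · left; rfl

theorem isThick_gapLadder_len_le {c : ℕ} (hc : 0 < c) {ε : ℝ} (hε : 0 < ε) :
    IsThick {n | (gapLadder c).len n ≤ ε} := by
  obtain ⟨j₀, hj₀⟩ := exists_pow_lt_of_lt_one hε (by norm_num : (2 : ℝ)⁻¹ < 1)
  intro N
  refine ⟨c * 4 ^ max j₀ (N + 1), fun k hk => ?_⟩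
  rw [mem_ofPred_eq, gapLadder_len_mul_pow_add hc (by omega)]
  exact (pow_le_pow_of_le_one (by norm_num) (by norm_num) (le_max_left _ _)).trans hj₀.le

theorem two_mul_lt_four_pow (i : ℕ) : 2 * i < 4 ^ i := by
  simpa [pow_mul] using Nat.lt_pow_self (n := 2 * i) one_lt_two

theorem eventually_gapLadder_len_eq_one (k k' : ℕ) :
    ∀ᶠ n in atTop, (gapLadder 1).len (k + n) = 1 ∨ (gapLadder 2).len (k' + n) = 1 := by
  filter_upwards [eventually_ge_atTop (4 * (k + k' + 1))] with n hn
  rcases gapLadder_len_eq_one_or_mem_block 1 (k + n) with h | ⟨i, hi, hi₁, hi₂⟩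
  · exact Or.inl h
  rcases gapLadder_len_eq_one_or_mem_block 2 (k' + n) with h | ⟨j, hj, hj₁, hj₂⟩
  · exact Or.inr h
  have hi4 := two_mul_lt_four_pow i
  have hj4 := two_mul_lt_four_pow j
  exfalso
  rcases lt_trichotomy i j with hij | rfl | hij
  · have : 4 * 4 ^ i ≤ 4 ^ j := by rw [← pow_succ']; exact Nat.pow_le_pow_right four_pos hij
    omega
  · omega
  · have : 4 * 4 ^ j ≤ 4 ^ i := by rw [← pow_succ']; exact Nat.pow_le_pow_right four_pos hij
    omega

/-- There are two cascades on complete metric spaces (closed subsets of `ℝ`), neither of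
which is syndetically sensitive, whose product (with the max metric) is cofinitely
sensitive. -/
theorem exists_nonSyndeticallySensitive_factors_with_cofinitelySensitive_product :
    ∃ (X Y : Set ℝ), IsClosed X ∧ IsClosed Y ∧
      ∃ (f : X → X) (g : Y → Y), Continuous f ∧ Continuous g ∧
        ¬ SyndeticallySensitive f ∧ ¬ SyndeticallySensitive g ∧
        CofinitelySensitive (Prod.map f g) := by
  refine ⟨(gapLadder 1).carrier, (gapLadder 2).carrier, Ladder.isClosed_carrier _,
    Ladder.isClosed_carrier _, (gapLadder 1).cascade, (gapLadder 2).cascade,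
    Ladder.continuous_cascade _, Ladder.continuous_cascade _,
    Ladder.not_syndeticallySensitive_cascade _ fun ε hε => isThick_gapLadder_len_le one_pos hε,
    Ladder.not_syndeticallySensitive_cascade _ fun ε hε => isThick_gapLadder_len_le two_pos hε,
    Ladder.cofinitelySensitive_prodMap_cascade _ _ (δ := 1 / 2) one_half_pos fun k k' => ?_⟩
  filter_upwards [eventually_gapLadder_len_eq_one k k'] with n hn
  rcases hn with h | h <;> norm_num [h]
end

section
/- There exists a cascade (X,f) on a complete metric space X such that (X,f) is syndetically sensitive but the cascade (X, f²) is not sensitive. Consequently, a sensitive semiflow (G,X) restricted to a syndetic closed submonoid G₁ ⊆ G need not be sensitive. -/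
namespace SqExample

open Set

noncomputable section

/-- length of the `m`-th block -/
def LL (m : ℕ) : ℝ := if Even m then 1 else m

/-- left endpoint of the `m`-th block -/
def aa (m : ℕ) : ℝ := (m : ℝ) ^ 2 + m

/-- the `m`-th block -/
def II (m : ℕ) : Set ℝ := Icc (aa m) (aa m + LL m)

/-- the space: union of all blocks -/
def XX : Set ℝ := ⋃ m, II m

lemma LL_pos (m : ℕ) : 0 < LL m := by
  unfold LL; split
  · norm_num
  · rename_i h
    have hm : m ≠ 0 := by rintro rfl; exact h (by decide)
    exact_mod_cast Nat.pos_of_ne_zero hm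

lemma LL_le (m : ℕ) : LL m ≤ (m : ℝ) + 1 := by
  unfold LL; split
  · have : (0:ℝ) ≤ m := by positivity
    linarith
  · linarith

lemma LL_even {m : ℕ} (h : Even m) : LL m = 1 := if_pos h

lemma LL_odd {m : ℕ} (h : ¬ Even m) : LL m = m := if_neg h

lemma aa_zero : aa 0 = 0 := by simp [aa]

lemma LL_zero : LL 0 = 1 := LL_even (by decide)

lemma aa_succ (m : ℕ) : aa (m + 1) = aa m + 2 * m + 2 := by
  unfold aa; push_cast; ring

lemma gap (m : ℕ) : aa m + LL m + 1 ≤ aa (m + 1) := by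
  have h1 := LL_le m
  have h2 : (0:ℝ) ≤ m := by positivity
  rw [aa_succ]; linarith

lemma aa_mono : Monotone aa := by
  apply monotone_nat_of_le_succ
  intro m
  have := gap m
  have := LL_pos m
  linarith

lemma m_le_aa (m : ℕ) : (m : ℝ) ≤ aa m := by
  unfold aa
  have := sq_nonneg (m : ℝ)
  linarith

lemma memX {m : ℕ} {x : ℝ} (h : x ∈ II m) : x ∈ XX := mem_iUnion.mpr ⟨m, h⟩

/-- localization: a point of a block lying in the unit-widened strip of block `m`
must belong to block `m`. -/
lemma strip {y : ℝ} {j m : ℕ} (hj : y ∈ II j) (h1 : aa m - 1 < y)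
    (h2 : y < aa m + LL m + 1) : j = m := by
  rcases lt_trichotomy j m with h | h | h
  · exfalso
    have g1 := gap j
    have g2 := aa_mono (show j + 1 ≤ m from h)
    have := hj.2
    linarith
  · exact h
  · exfalso
    have g1 := gap m
    have g2 := aa_mono (show m + 1 ≤ j from h)
    have := hj.1
    linarith

lemma II_unique {x : ℝ} {j m : ℕ} (hj : x ∈ II j) (hm : x ∈ II m) : j = m := by
  have h1 : aa m - 1 < x := by have := hm.1; linarith
  have h2 : x < aa m + LL m + 1 := by have := hm.2; linarith
  exact strip hj h1 h2

open Classical in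
/-- index of the block containing `x` (junk value if none) -/
def idxOf (x : ℝ) : ℕ := if h : ∃ m, x ∈ II m then h.choose else 0

lemma idx_eq {x : ℝ} {m : ℕ} (hm : x ∈ II m) : idxOf x = m := by
  unfold idxOf
  rw [dif_pos ⟨m, hm⟩]
  exact II_unique (Exists.choose_spec (⟨m, hm⟩ : ∃ k, x ∈ II k)) hm

lemma mem_II_affine {m : ℕ} {x : ℝ} (hx : x ∈ II m) (k : ℕ) :
    aa k + LL k / LL m * (x - aa m) ∈ II k := by
  obtain ⟨h1, h2⟩ := hx
  have hr : 0 ≤ LL k / LL m := div_nonneg (LL_pos k).le (LL_pos m).le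
  constructor
  · have : 0 ≤ LL k / LL m * (x - aa m) := mul_nonneg hr (by linarith)
    linarith
  · have h3 : LL k / LL m * (x - aa m) ≤ LL k / LL m * LL m :=
      mul_le_mul_of_nonneg_left (by linarith) hr
    rw [div_mul_cancel₀ _ (LL_pos m).ne'] at h3
    linarith

/-- the cascade map: affine bijection from block `m` onto block `m+1` -/
def ff (x : XX) : XX :=
  ⟨aa (idxOf x.1 + 1) + LL (idxOf x.1 + 1) / LL (idxOf x.1) * (x.1 - aa (idxOf x.1)), by
    obtain ⟨m, hm⟩ := mem_iUnion.mp x.2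
    rw [idx_eq hm]
    exact memX (mem_II_affine hm (m + 1))⟩

lemma ff_spec (x : XX) (m : ℕ) (hm : x.1 ∈ II m) :
    (ff x).1 = aa (m + 1) + LL (m + 1) / LL m * (x.1 - aa m) := by
  simp only [ff, idx_eq hm]

lemma iter_spec (n : ℕ) (x : XX) (m : ℕ) (hm : x.1 ∈ II m) :
    (ff^[n] x).1 = aa (m + n) + LL (m + n) / LL m * (x.1 - aa m) := by
  induction n with
  | zero =>
    simp only [Function.iterate_zero, id_eq, Nat.add_zero]
    rw [div_self (LL_pos m).ne', one_mul]
    ring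
  | succ n ih =>
    have hmem : (ff^[n] x).1 ∈ II (m + n) := by
      rw [ih]; exact mem_II_affine hm (m + n)
    rw [Function.iterate_succ_apply', ff_spec _ (m + n) hmem, ih]
    have h1 : LL m ≠ 0 := (LL_pos m).ne'
    have h2 : LL (m + n) ≠ 0 := (LL_pos (m + n)).ne'
    have hn : m + (n + 1) = m + n + 1 := rfl
    rw [hn]
    field_simp
    ring

lemma iter_mem (n : ℕ) (x : XX) (m : ℕ) (hm : x.1 ∈ II m) :
    (ff^[n] x).1 ∈ II (m + n) := by
  rw [iter_spec n x m hm]; exact mem_II_affine hm (m + n)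

lemma iter_dist (n : ℕ) (x y : XX) (m : ℕ) (hx : x.1 ∈ II m) (hy : y.1 ∈ II m) :
    dist (ff^[n] x) (ff^[n] y) = LL (m + n) / LL m * |x.1 - y.1| := by
  have hr : 0 ≤ LL (m + n) / LL m := div_nonneg (LL_pos _).le (LL_pos _).le
  rw [Subtype.dist_eq, iter_spec n x m hx, iter_spec n y m hy, Real.dist_eq]
  rw [show aa (m + n) + LL (m + n) / LL m * (x.1 - aa m) -
      (aa (m + n) + LL (m + n) / LL m * (y.1 - aa m)) =
      LL (m + n) / LL m * (x.1 - y.1) from by ring]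
  rw [abs_mul, abs_of_nonneg hr]

lemma ff_cont : Continuous ff := by
  apply continuous_induced_rng.mpr
  rw [continuous_iff_continuousAt]
  intro x
  obtain ⟨m, hm⟩ := mem_iUnion.mp x.2
  have hg : ContinuousAt (fun y : XX => aa (m + 1) + LL (m + 1) / LL m * (y.1 - aa m)) x := by
    fun_prop
  apply hg.congr
  have hopen : IsOpen {y : XX | y.1 ∈ Ioo (aa m - 1) (aa m + LL m + 1)} :=
    isOpen_Ioo.preimage continuous_subtype_val
  have hxmem : x ∈ {y : XX | y.1 ∈ Ioo (aa m - 1) (aa m + LL m + 1)} := by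
    constructor
    · have := hm.1; linarith
    · have := hm.2; linarith
  filter_upwards [hopen.mem_nhds hxmem] with y hy
  obtain ⟨j, hj⟩ := mem_iUnion.mp y.2
  have hjm : j = m := strip hj hy.1 hy.2
  subst hjm
  exact (ff_spec y j hj).symm

lemma XX_closed : IsClosed XX := by
  have hlf : LocallyFinite II := by
    intro x
    refine ⟨Ioo (x - 1) (x + 1), Ioo_mem_nhds (by linarith) (by linarith), ?_⟩
    apply Set.Finite.subset (Set.finite_Iio (⌈x + 1⌉₊ + 1))
    intro m hm
    obtain ⟨y, hy1, hy2⟩ := hm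
    have h1 : (m : ℝ) ≤ y := le_trans (m_le_aa m) hy1.1
    have h2 : (m : ℝ) < x + 1 := lt_of_le_of_lt h1 hy2.2
    have h3 : (m : ℝ) < (⌈x + 1⌉₊ : ℝ) + 1 :=
      lt_of_lt_of_le h2 (by have := Nat.le_ceil (x + 1); linarith)
    have : m < ⌈x + 1⌉₊ + 1 := by exact_mod_cast h3
    exact this
  exact hlf.isClosed_iUnion (fun m => isClosed_Icc)

lemma ff_synd : SyndeticallySensitive ff := by
  refine ⟨1, one_pos, ?_⟩
  intro U hU hne
  obtain ⟨x, hxU⟩ := hne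
  obtain ⟨m, hm⟩ := mem_iUnion.mp x.2
  obtain ⟨r, hr, hball⟩ := Metric.isOpen_iff.mp hU x hxU
  set d : ℝ := min (r / 2) (LL m / 2) with hd
  have hLm := LL_pos m
  have hd0 : 0 < d := lt_min (by linarith) (by linarith)
  have hdr : d ≤ r / 2 := min_le_left _ _
  have hdL : d ≤ LL m / 2 := min_le_right _ _
  set y : ℝ := if x.1 ≤ aa m + LL m / 2 then x.1 + d else x.1 - d with hy
  have hyI : y ∈ II m := by
    rcases le_or_gt x.1 (aa m + LL m / 2) with h | h
    · rw [hy, if_pos h]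
      constructor
      · have := hm.1; linarith
      · linarith
    · rw [hy, if_neg (not_le.mpr h)]
      constructor
      · linarith
      · have := hm.2; linarith
  have hdist : |x.1 - y| = d := by
    rcases le_or_gt x.1 (aa m + LL m / 2) with h | h
    · rw [hy, if_pos h]
      rw [show x.1 - (x.1 + d) = -d from by ring, abs_neg, abs_of_pos hd0]
    · rw [hy, if_neg (not_le.mpr h)]
      rw [show x.1 - (x.1 - d) = d from by ring, abs_of_pos hd0]
  set Y : XX := ⟨y, memX hyI⟩ with hY
  have hYU : Y ∈ U := by
    apply hball
    rw [Metric.mem_ball, Subtype.dist_eq, Real.dist_eq]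
    rw [hY]
    rw [abs_sub_comm, hdist]
    linarith
  set K : ℕ := ⌈LL m / d⌉₊ + 1 with hK
  have key : ∀ n : ℕ, K ≤ n → ¬ Even (m + n) → n ∈ sensTimes ff U 1 := by
    intro n hKn hodd
    have hLmn : LL (m + n) = (m + n : ℕ) := LL_odd hodd
    have hgt : 1 < LL (m + n) / LL m * d := by
      have h1 : LL m / d < (K : ℝ) := by
        have := Nat.le_ceil (LL m / d)
        have hcast : ((⌈LL m / d⌉₊ : ℕ) : ℝ) < (K : ℝ) := by
          rw [hK]; push_cast; linarith
        linarith
      have h2 : (K : ℝ) ≤ (n : ℝ) := by exact_mod_cast hKn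
      have h3 : (n : ℝ) ≤ LL (m + n) := by
        rw [hLmn]; exact_mod_cast Nat.le_add_left n m
      have h4 : LL m < (n : ℝ) * d := by
        have := (div_lt_iff₀ hd0).mp (lt_of_lt_of_le h1 h2)
        linarith
      have h5 : (n : ℝ) * d ≤ LL (m + n) * d := mul_le_mul_of_nonneg_right h3 hd0.le
      rw [div_mul_eq_mul_div, lt_div_iff₀ hLm, one_mul]
      linarith
    show ENNReal.ofReal 1 < EMetric.diam (ff^[n] '' U)
    have hd2 : dist (ff^[n] x) (ff^[n] Y) = LL (m + n) / LL m * d := by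
      rw [iter_dist n x Y m hm hyI]
      rw [show Y.1 = y from rfl, hdist]
    calc ENNReal.ofReal 1 < ENNReal.ofReal (LL (m + n) / LL m * d) := by
          rw [ENNReal.ofReal_lt_ofReal_iff (by linarith)]; exact hgt
      _ = edist (ff^[n] x) (ff^[n] Y) := by rw [edist_dist, hd2]
      _ ≤ EMetric.diam (ff^[n] '' U) :=
          EMetric.edist_le_diam_of_mem (Set.mem_image_of_mem _ hxU)
            (Set.mem_image_of_mem _ hYU)
  refine ⟨K + 2, ?_⟩
  intro t
  by_cases hE : Even (m + t + K)
  · refine ⟨K + 1, by omega, ?_⟩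
    apply key (t + (K + 1)) (by omega)
    intro hc
    rw [show m + (t + (K + 1)) = (m + t + K) + 1 from by omega] at hc
    exact (Nat.even_add_one.mp hc) hE
  · refine ⟨K, by omega, ?_⟩
    apply key (t + K) (by omega)
    intro hc
    rw [show m + (t + K) = m + t + K from by omega] at hc
    exact hE hc

lemma mem_II_zero {z : ℝ} (hz : z ∈ XX) (h0 : 0 < z) (h1 : z < 1) : z ∈ II 0 := by
  obtain ⟨j, hj⟩ := mem_iUnion.mp hz
  have : j = 0 := by
    apply strip hj
    · rw [aa_zero]; linarith
    · rw [aa_zero, LL_zero]; linarith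
  rwa [this] at hj

lemma ff_sq_not_sens : ¬ Sensitive (ff ∘ ff) := by
  rintro ⟨ε, hε, H⟩
  set δ : ℝ := min ε 1 with hδ
  have hδ0 : 0 < δ := lt_min hε one_pos
  have hδε : δ ≤ ε := min_le_left _ _
  have hδ1 : δ ≤ 1 := min_le_right _ _
  set U : Set XX := {z : XX | 0 < z.1 ∧ z.1 < δ} with hU
  have hUopen : IsOpen U := by
    have : U = Subtype.val ⁻¹' (Ioo 0 δ) := rfl
    rw [this]
    exact isOpen_Ioo.preimage continuous_subtype_val
  have hUne : U.Nonempty := by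
    refine ⟨⟨δ / 2, memX (m := 0) ?_⟩, ?_, ?_⟩
    · rw [II, aa_zero, LL_zero]
      constructor <;> [linarith; (simp only [zero_add]; linarith)]
    · show (0:ℝ) < δ / 2; linarith
    · show δ / 2 < δ; linarith
  obtain ⟨n, hn⟩ := H U hUopen hUne
  have hcomp : (ff ∘ ff)^[n] = ff^[2 * n] := by
    rw [Function.iterate_mul]
    rfl
  have hle : EMetric.diam ((ff ∘ ff)^[n] '' U) ≤ ENNReal.ofReal ε := by
    apply EMetric.diam_le
    rintro p ⟨z, hz, rfl⟩ q ⟨w, hw, rfl⟩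
    have hz0 : z.1 ∈ II 0 := mem_II_zero z.2 hz.1 (lt_of_lt_of_le hz.2 hδ1)
    have hw0 : w.1 ∈ II 0 := mem_II_zero w.2 hw.1 (lt_of_lt_of_le hw.2 hδ1)
    rw [hcomp, edist_dist, iter_dist (2 * n) z w 0 hz0 hw0]
    have hLev : LL (0 + 2 * n) = 1 := LL_even (by simp [Nat.even_add, parity_simps])
    rw [hLev, LL_zero, div_self one_ne_zero, one_mul]
    apply ENNReal.ofReal_le_ofReal
    have h1 := hz.1; have h2 := hz.2; have h3 := hw.1; have h4 := hw.2
    rw [abs_sub_le_iff]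
    constructor <;> linarith
  exact absurd hn (not_lt.mpr hle)

end

end SqExample

/-- There is a cascade on a complete metric space (a closed subset of `ℝ`) which is
syndetically sensitive while the cascade of its square `f²` is not sensitive; thus a
sensitive semiflow restricted to a syndetic closed submonoid need not be sensitive. -/
theorem exists_syndeticallySensitive_with_nonSensitive_square :
    ∃ (X : Set ℝ), IsClosed X ∧
      ∃ f : X → X, Continuous f ∧ SyndeticallySensitive f ∧ ¬ Sensitive (f ∘ f) := by
  exact ⟨SqExample.XX, SqExample.XX_closed, SqExample.ff, SqExample.ff_cont,
    SqExample.ff_synd, SqExample.ff_sq_not_sens⟩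
end
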